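/- Let Ω ⊂ ℝⁿ be a nonempty open bounded set and let u be a solution of the Dirichlet problem (D) which is differentiable at every point of Ω. Let K be the set of maximum points of u on the closure of Ω and let A ⊆ Ω be an open neighborhood of K. Assume ∇u is locally Lipschitz continuous on A ∖ K (i.e., u ∈ C^{1,1}(A ∖ K)). Then for every α > 1/3, u is not of class C^{1,α} on A: there is no constant C > 0 such that |∇u(x) − ∇u(y)| ≤ C|x−y|^α for all x, y ∈ A. -/

import Mathlib

open Set Metric Filter MeasureTheory
open scoped RealInnerProductSpace Topology NNReal

noncomputable section

abbrev Euc (n : ℕ) := EuclideanSpace ℝ (Fin n)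

def infLap {n : ℕ} (φ : Euc n → ℝ) (x : Euc n) : ℝ :=
  ⟪fderiv ℝ (gradient φ) x (gradient φ x), gradient φ x⟫

def IsViscSubsol {n : ℕ} (Ω : Set (Euc n)) (f : Euc n → ℝ → ℝ) (u : Euc n → ℝ) : Prop :=
  ContinuousOn u Ω ∧
  ∀ x₀ ∈ Ω, ∀ φ : Euc n → ℝ, ContDiff ℝ 2 φ →
    IsLocalMaxOn (fun x => u x - φ x) Ω x₀ → -infLap φ x₀ - f x₀ (u x₀) ≤ 0

def IsViscSupersol {n : ℕ} (Ω : Set (Euc n)) (f : Euc n → ℝ → ℝ) (u : Euc n → ℝ) : Prop :=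
  ContinuousOn u Ω ∧
  ∀ x₀ ∈ Ω, ∀ φ : Euc n → ℝ, ContDiff ℝ 2 φ →
    IsLocalMinOn (fun x => u x - φ x) Ω x₀ → 0 ≤ -infLap φ x₀ - f x₀ (u x₀)

def IsDirichletSol {n : ℕ} (Ω : Set (Euc n)) (u : Euc n → ℝ) : Prop :=
  ContinuousOn u (closure Ω) ∧ (∀ x ∈ frontier Ω, u x = 0) ∧
  IsViscSubsol Ω (fun _ _ => 1) u ∧ IsViscSupersol Ω (fun _ _ => 1) u

def IntSphereCond {n : ℕ} (Ω : Set (Euc n)) : Prop :=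
  ∀ y ∈ frontier Ω, ∃ z : Euc n, ∃ R : ℝ, 0 < R ∧ ball z R ⊆ Ω ∧ y ∈ sphere z R

/-- `f` is locally Lipschitz continuous on `S`. -/
def LocLipschitzOn {n : ℕ} (f : Euc n → Euc n) (S : Set (Euc n)) : Prop :=
  ∀ x ∈ S, ∃ ε : ℝ, 0 < ε ∧ ∃ L : ℝ≥0, LipschitzOnWith L f (ball x ε ∩ S)


/-!
At a maximum point `x₀` of `u` the gradient vanishes, so a bound
`|∇u(x) - ∇u(y)| ≤ C|x - y|^α` gives `|∇u| ≤ C r^α` on `B(x₀, r)` and hence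
`u(x₀) - u ≤ C r^(1+α)` on `∂B(x₀, r)`. For the paraboloid `φ = -b|x - x₀|²` with
`b = 2C r^(α-1)`, the minimum of `u - φ` over the closed ball is therefore attained inside it,
and the supersolution inequality there, `-Δ∞φ = 8b³|x - x₀|² ≥ 1`, forces
`1 ≤ 8b³r² = 64C³r^(3α-1)`, which fails for small `r` exactly because `α > 1/3`.
-/

section Gradient

variable {E : Type*} [NormedAddCommGroup E] [InnerProductSpace ℝ E]

theorem contDiff_paraboloid (b : ℝ) (c : E) :
    ContDiff ℝ 2 (fun z => -b * ‖z - c‖ ^ 2) :=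
  contDiff_const.mul ((contDiff_id.sub contDiff_const).norm_sq ℝ)

variable [CompleteSpace E]

theorem IsLocalMax.gradient_eq_zero {u : E → ℝ} {x : E} (h : IsLocalMax u x) :
    gradient u x = 0 := by
  rw [gradient, h.fderiv_eq_zero, map_zero]

theorem hasGradientAt_paraboloid (b : ℝ) (c y : E) :
    HasGradientAt (fun z => -b * ‖z - c‖ ^ 2) ((-(2 * b)) • (y - c)) y := by
  rw [hasGradientAt_iff_hasFDerivAt]
  refine (((hasFDerivAt_id y).sub_const c).norm_sq.const_mul (-b)).congr_fderiv ?_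
  ext v
  simp only [id_eq, map_sub, ContinuousLinearMap.comp_id, neg_smul, neg_apply, smul_apply,
    sub_apply, coe_innerSL_apply, nsmul_eq_mul, smul_eq_mul, map_neg, map_smul,
    InnerProductSpace.toDual_apply_apply]
  ring

theorem gradient_paraboloid (b : ℝ) (c : E) :
    gradient (fun z => -b * ‖z - c‖ ^ 2) = fun y => (-(2 * b)) • (y - c) :=
  funext fun y => (hasGradientAt_paraboloid b c y).gradient

theorem Convex.norm_image_sub_le_of_norm_gradient_le {u : E → ℝ} {s : Set E} {M : ℝ}
    (hs : Convex ℝ s) (hdiff : ∀ y ∈ s, DifferentiableAt ℝ u y)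
    (hbound : ∀ y ∈ s, ‖gradient u y‖ ≤ M)
    {x y : E} (hx : x ∈ s) (hy : y ∈ s) : ‖u y - u x‖ ≤ M * ‖y - x‖ :=
  hs.norm_image_sub_le_of_norm_fderiv_le hdiff
    (fun z hz => (InnerProductSpace.toDual ℝ E).symm.norm_map (fderiv ℝ u z) ▸ hbound z hz) hx hy

end Gradient

theorem exists_pos_le_mul_rpow_lt_one {β : ℝ} (hβ : 0 < β) (M : ℝ) {ε : ℝ} (hε : 0 < ε) :
    ∃ r, 0 < r ∧ r ≤ ε ∧ M * r ^ β < 1 := by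
  have hlim : Tendsto (fun r : ℝ => M * r ^ β) (𝓝[>] 0) (𝓝 0) := by
    simpa [Real.zero_rpow hβ.ne'] using
      ((Real.continuousAt_rpow_const 0 β (Or.inr hβ.le)).tendsto.const_mul M).mono_left
        nhdsWithin_le_nhds
  obtain ⟨r, hsmall, hr⟩ :=
    ((hlim.eventually (gt_mem_nhds one_pos)).and (Ioc_mem_nhdsGT hε)).exists
  exact ⟨r, hr.1, hr.2, hsmall⟩

theorem infLap_paraboloid {n : ℕ} (b : ℝ) (c x : Euc n) :
    infLap (fun z => -b * ‖z - c‖ ^ 2) x = -(8 * b ^ 3) * ‖x - c‖ ^ 2 := by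
  have hderiv : HasFDerivAt (fun y : Euc n => (-(2 * b)) • (y - c))
      ((-(2 * b)) • ContinuousLinearMap.id ℝ (Euc n)) x :=
    ((hasFDerivAt_id x).sub_const c).const_smul (-(2 * b))
  rw [infLap, gradient_paraboloid, hderiv.fderiv]
  simp only [smul_apply, ContinuousLinearMap.coe_id', id_eq,
    real_inner_smul_left, real_inner_smul_right, real_inner_self_eq_norm_sq]
  ring

section Supersolution

variable {n : ℕ} {Ω : Set (Euc n)} {u : Euc n → ℝ}

theorem IsViscSupersol.one_le_of_lt_on_sphere (hu : IsViscSupersol Ω (fun _ _ => 1) u)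
    {x₀ : Euc n} {r b : ℝ} (hr : 0 < r) (hb : 0 ≤ b) (hball : closedBall x₀ r ⊆ Ω)
    (hsphere : ∀ y ∈ sphere x₀ r, u x₀ < u y + b * r ^ 2) :
    1 ≤ 8 * b ^ 3 * r ^ 2 := by
  set φ : Euc n → ℝ := fun z => -b * ‖z - x₀‖ ^ 2
  obtain ⟨xs, hxs, hmin⟩ := (isCompact_closedBall x₀ r).exists_isMinOn
    ⟨x₀, mem_closedBall_self hr.le⟩
    ((hu.1.mono hball).sub (contDiff_paraboloid b x₀).continuous.continuousOn)
  have hxs_ball : xs ∈ ball x₀ r := by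
    refine lt_of_le_of_ne (mem_closedBall.1 hxs) fun hdist => ?_
    have hx₀ : u xs + b * r ^ 2 ≤ u x₀ := by
      simpa [φ, ← dist_eq_norm, hdist] using hmin (mem_closedBall_self hr.le)
    exact (hsphere xs (mem_sphere.2 hdist)).not_ge hx₀
  have hlocmin : IsLocalMinOn (fun z => u z - φ z) Ω xs :=
    (hmin.on_subset ball_subset_closedBall).isLocalMin
      (isOpen_ball.mem_nhds hxs_ball) |>.on Ω
  have h := hu.2 xs (hball hxs) φ (contDiff_paraboloid b x₀) hlocmin
  rw [infLap_paraboloid] at h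
  have hdist : ‖xs - x₀‖ ^ 2 ≤ r ^ 2 := by
    gcongr
    exact mem_closedBall_iff_norm.1 hxs
  nlinarith [pow_nonneg hb 3]

theorem IsViscSupersol.not_holder_gradient_at_isLocalMax
    (hu : IsViscSupersol Ω (fun _ _ => 1) u) {x₀ : Euc n} (hΩ : Ω ∈ 𝓝 x₀)
    (hmax : IsLocalMax u x₀) (hdiff : ∀ᶠ y in 𝓝 x₀, DifferentiableAt ℝ u y) {C α : ℝ}
    (hC : 0 < C) (hα : 1 / 3 < α) :
    ¬ ∀ᶠ y in 𝓝 x₀, ‖gradient u y - gradient u x₀‖ ≤ C * ‖y - x₀‖ ^ α := by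
  intro hhol
  obtain ⟨ε, hε, hnear⟩ := nhds_basis_closedBall.eventually_iff.1
    ((eventually_mem_set.2 hΩ).and (hdiff.and hhol))
  obtain ⟨r, hr, hrε, hsmall⟩ :=
    exists_pos_le_mul_rpow_lt_one (by linarith : 0 < 3 * α - 1) (64 * C ^ 3) hε
  have hrnear : closedBall x₀ r ⊆ closedBall x₀ ε := closedBall_subset_closedBall hrε
  have hgrad : ∀ y ∈ closedBall x₀ r, ‖gradient u y‖ ≤ C * r ^ α := by
    intro y hy
    have hy' := (hnear (hrnear hy)).2.2
    rw [hmax.gradient_eq_zero, sub_zero] at hy'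
    exact hy'.trans (by gcongr; exact mem_closedBall_iff_norm.1 hy)
  set b := 2 * C * r ^ α / r with hb
  have hosc : ∀ y ∈ sphere x₀ r, u x₀ < u y + b * r ^ 2 := by
    intro y hy
    have hmv := (convex_closedBall x₀ r).norm_image_sub_le_of_norm_gradient_le
      (fun z hz => (hnear (hrnear hz)).2.1) hgrad (mem_closedBall_self hr.le)
      (sphere_subset_closedBall hy)
    rw [mem_sphere_iff_norm.1 hy, Real.norm_eq_abs] at hmv
    have hbr : b * r ^ 2 = 2 * (C * r ^ α * r) := by rw [hb]; field_simp
    have hpos : 0 < C * r ^ α * r := by positivity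
    linarith [neg_abs_le (u y - u x₀)]
  have hone := hu.one_le_of_lt_on_sphere hr (by positivity)
    (fun y hy => (hnear (hrnear hy)).1) hosc
  have hpow : 8 * b ^ 3 * r ^ 2 = 64 * C ^ 3 * r ^ (3 * α - 1) := by
    have hcube : r ^ (3 * α) = (r ^ α) ^ 3 := by
      rw [← Real.rpow_natCast, ← Real.rpow_mul hr.le, mul_comm]
      norm_num
    rw [Real.rpow_sub_one hr.ne', hcube, hb]
    field_simp
    ring
  linarith

end Supersolution

theorem stmt19_general {n : ℕ} (Ω : Set (Euc n)) (hne : Ω.Nonempty) (hopen : IsOpen Ω)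
    (hbdd : Bornology.IsBounded Ω)
    (u : Euc n → ℝ) (hu : IsDirichletSol Ω u)
    (hdiff : ∀ x ∈ Ω, DifferentiableAt ℝ u x)
    (K : Set (Euc n)) (hK : K = {y ∈ closure Ω | IsMaxOn u (closure Ω) y})
    (A : Set (Euc n)) (hA : IsOpen A) (hKA : K ⊆ A) (hAΩ : A ⊆ Ω)
    (α : ℝ) (hα : 1 / 3 < α) :
    ¬ ∃ C : ℝ, 0 < C ∧ ∀ x ∈ A, ∀ y ∈ A,
      ‖gradient u x - gradient u y‖ ≤ C * ‖x - y‖ ^ α := by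
  rintro ⟨C, hC, hholder⟩
  obtain ⟨x₀, hx₀, hmax⟩ := hbdd.isCompact_closure.exists_isMaxOn hne.closure hu.1
  have hx₀A : x₀ ∈ A := hKA (hK ▸ ⟨hx₀, hmax⟩)
  have hΩ : Ω ∈ 𝓝 x₀ := hopen.mem_nhds (hAΩ hx₀A)
  refine hu.2.2.2.not_holder_gradient_at_isLocalMax hΩ
    (hmax.isLocalMax (mem_of_superset hΩ subset_closure)) (eventually_of_mem hΩ hdiff) hC hα ?_
  filter_upwards [hA.mem_nhds hx₀A] with y hy using hholder y hy x₀ hx₀A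

theorem stmt19 {n : ℕ} (Ω : Set (Euc n)) (hne : Ω.Nonempty) (hopen : IsOpen Ω)
    (hbdd : Bornology.IsBounded Ω)
    (u : Euc n → ℝ) (hu : IsDirichletSol Ω u)
    (hdiff : ∀ x ∈ Ω, DifferentiableAt ℝ u x)
    (K : Set (Euc n)) (hK : K = {y ∈ closure Ω | IsMaxOn u (closure Ω) y})
    (A : Set (Euc n)) (hA : IsOpen A) (hKA : K ⊆ A) (hAΩ : A ⊆ Ω)
    -- `u ∈ C^{1,1}(A ∖ K)`
    (hC11 : LocLipschitzOn (fun y => gradient u y) (A \ K))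
    (α : ℝ) (hα : 1 / 3 < α) :
    ¬ ∃ C : ℝ, 0 < C ∧ ∀ x ∈ A, ∀ y ∈ A,
      ‖gradient u x - gradient u y‖ ≤ C * ‖x - y‖ ^ α :=
  stmt19_general Ω hne hopen hbdd u hu hdiff K hK A hA hKA hAΩ α hα
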